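/- arXiv:2006.04645 — 7 statements merged into one kernel-verified Lean document; each statement's English description precedes it below -/
import Mathlib

section
/- Let H be a complex Hilbert space, T : dom T ⊆ H → H a densely defined self-adjoint Fredholm operator, Π a finite rank orthogonal projection on H, and α > 0. If the range of T and the range of Π span H as an (internal) direct sum, i.e. rg T ⊕ rg Π = H, then T + αΠ is invertible (bijective from dom T onto H). -/
open LinearPMap
open scoped ComplexInnerProductSpace

lemma pmap_congr {H : Type*} [NormedAddCommGroup H] [InnerProductSpace ℂ H]
    {S T : H →ₗ.[ℂ] H} (h : S = T) (x : S.domain) : S x = T ⟨x, h ▸ x.2⟩ := by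
  subst h; rfl

/-- Lemma 5.2(a): Let `H` be a complex Hilbert space, `T` a densely defined self-adjoint
Fredholm operator, `P` a finite rank orthogonal projection, `α > 0`. If
`rg T ⊕ rg P = H` (internal direct sum) then `T + αP : dom T → H` is bijective. -/
theorem stmt0 {H : Type*} [NormedAddCommGroup H] [InnerProductSpace ℂ H] [CompleteSpace H]
    (T : H →ₗ.[ℂ] H) (hdense : Dense (T.domain : Set H))
    (hsa : IsSelfAdjoint T)
    (hclosed : IsClosed ((LinearMap.range T.toFun : Submodule ℂ H) : Set H))
    (hker : FiniteDimensional ℂ (LinearMap.ker T.toFun))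
    (hcoker : FiniteDimensional ℂ (H ⧸ LinearMap.range T.toFun))
    (P : H →L[ℂ] H) (hPsa : IsSelfAdjoint P) (hPidem : P ∘L P = P)
    (hPfin : FiniteDimensional ℂ (LinearMap.range (P : H →ₗ[ℂ] H)))
    (α : ℝ) (hα : 0 < α)
    (hdirect : LinearMap.range T.toFun ⊓ LinearMap.range (P : H →ₗ[ℂ] H) = ⊥)
    (hspan : LinearMap.range T.toFun ⊔ LinearMap.range (P : H →ₗ[ℂ] H) = ⊤) :
    Function.Bijective (fun u : T.domain => T u + (α : ℂ) • P (u : H)) := by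
  rw [LinearPMap.isSelfAdjoint_def] at hsa
  set R := LinearMap.range T.toFun with hR
  set Q := LinearMap.range (P : H →ₗ[ℂ] H) with hQ
  have hdom : (T†).domain = T.domain := congrArg LinearPMap.domain hsa
  -- symmetry
  have hfa : (T†).IsFormalAdjoint T := LinearPMap.adjoint_isFormalAdjoint hdense
  have hsymm : ∀ x y : T.domain, ⟪T x, (y : H)⟫ = ⟪(x : H), T y⟫ := by
    intro x y
    have hx : (x : H) ∈ (T†).domain := by rw [hdom]; exact x.2
    have := hfa ⟨(x : H), hx⟩ y
    rwa [pmap_congr hsa ⟨(x : H), hx⟩, show (⟨(⟨(x:H), hx⟩ : (T†).domain), _⟩ : T.domain) = x from Subtype.ext rfl] at this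
  -- P facts
  have hPfix : ∀ x ∈ Q, P x = x := by
    intro x hx
    obtain ⟨y, rfl⟩ := hx
    have := congrArg (fun f : H →L[ℂ] H => f y) hPidem
    simpa using this
  have hPinner : ∀ x y : H, ⟪P x, y⟫ = ⟪x, P y⟫ := by
    intro x y
    rw [ContinuousLinearMap.isSelfAdjoint_iff'] at hPsa
    conv_lhs => rw [← hPsa]
    rw [ContinuousLinearMap.adjoint_inner_left]
  have hPzero : ∀ x : H, (∀ y ∈ Q, ⟪y, x⟫ = 0) → P x = 0 := by
    intro x hx
    have h1 : ⟪P x, P x⟫ = 0 := by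
      rw [hPinner]
      have : P (P x) = P x := hPfix _ (LinearMap.mem_range_self _ x)
      rw [this, ← inner_conj_symm, hx (P x) (LinearMap.mem_range_self _ x), _root_.map_zero]
    exact inner_self_eq_zero.mp h1
  have hPzero' : ∀ x : H, P x = 0 → ∀ y ∈ Q, ⟪y, x⟫ = 0 := by
    intro x hx y hy
    rw [← hPfix y hy, hPinner, hx, inner_zero_right]
  -- kernel characterization
  have hkerR : ∀ x : T.domain, T x = 0 → ∀ y ∈ R, ⟪y, (x : H)⟫ = 0 := by
    intro x hx y hy
    obtain ⟨v, rfl⟩ := hy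
    have : ⟪T x, (v : H)⟫ = ⟪(x : H), T v⟫ := hsymm x v
    rw [hx, inner_zero_left] at this
    rw [← inner_conj_symm, show T.toFun v = T v from rfl, ← this, _root_.map_zero]
  have hRperp : ∀ u : H, (∀ y ∈ R, ⟪y, u⟫ = 0) → ∃ x : T.domain, (x : H) = u ∧ T x = 0 := by
    intro u hu
    have hmem : u ∈ (T†).domain := by
      apply LinearPMap.mem_adjoint_domain_of_exists
      refine ⟨0, fun v => ?_⟩
      rw [inner_zero_left, ← inner_conj_symm, hu (T v) (LinearMap.mem_range_self _ v), _root_.map_zero]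
    have hval : T† ⟨u, hmem⟩ = 0 := by
      apply LinearPMap.adjoint_apply_eq hdense
      intro v
      rw [inner_zero_left, ← inner_conj_symm, hu (T v) (LinearMap.mem_range_self _ v), _root_.map_zero]
    refine ⟨⟨u, hdom ▸ hmem⟩, rfl, ?_⟩
    rw [← pmap_congr hsa ⟨u, hmem⟩] at *
    exact hval
  -- vanish on both ranges implies zero
  have hperp_top : ∀ u : H, (∀ y ∈ R, ⟪y, u⟫ = 0) → (∀ y ∈ Q, ⟪y, u⟫ = 0) → u = 0 := by
    intro u h1 h2
    have : ∀ y : H, ⟪y, u⟫ = 0 := by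
      intro y
      have hy : y ∈ R ⊔ Q := by rw [hspan]; trivial
      obtain ⟨a, ha, b, hb, rfl⟩ := Submodule.mem_sup.mp hy
      rw [inner_add_left, h1 a ha, h2 b hb, add_zero]
    have := this u
    rwa [inner_self_eq_zero] at this
  -- kernel as submodule of H equals Rᗮ
  set K : Submodule ℂ H := (LinearMap.ker T.toFun).map T.domain.subtype with hK
  have hKperp : K = Rᗮ := by
    apply le_antisymm
    · rintro _ ⟨w, hw, rfl⟩
      rw [Submodule.mem_orthogonal]
      intro y hy
      exact hkerR w hw y hy
    · intro u hu
      rw [Submodule.mem_orthogonal] at hu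
      obtain ⟨x, hxu, hx0⟩ := hRperp u hu
      exact ⟨x, hx0, hxu⟩
  have hcR : CompleteSpace R := hclosed.completeSpace_coe
  have hcomplR : IsCompl R Rᗮ := Submodule.isCompl_orthogonal_of_hasOrthogonalProjection
  have hcomplQ : IsCompl R Q := ⟨disjoint_iff.mpr hdirect, codisjoint_iff.mpr hspan⟩
  let e1 : (H ⧸ R) ≃ₗ[ℂ] Rᗮ := Submodule.quotientEquivOfIsCompl R Rᗮ hcomplR
  let e2 : (H ⧸ R) ≃ₗ[ℂ] Q := Submodule.quotientEquivOfIsCompl R Q hcomplQ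
  let e3 : (LinearMap.ker T.toFun) ≃ₗ[ℂ] K :=
    Submodule.equivMapOfInjective T.domain.subtype (Submodule.injective_subtype _) _
  have hrank : Module.finrank ℂ (LinearMap.ker T.toFun) = Module.finrank ℂ Q := by
    rw [e3.finrank_eq, hKperp, ← e1.finrank_eq, e2.finrank_eq]
  -- the map φ : ker T → Q
  let φ : (LinearMap.ker T.toFun) →ₗ[ℂ] Q :=
    LinearMap.codRestrict Q
      (((P : H →ₗ[ℂ] H).comp T.domain.subtype).comp (LinearMap.ker T.toFun).subtype)
      (fun w => LinearMap.mem_range_self _ _)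
  have hφ : ∀ w : LinearMap.ker T.toFun, (φ w : H) = P ((w : T.domain) : H) := fun _ => rfl
  have hφinj : Function.Injective φ := by
    rw [← LinearMap.ker_eq_bot, LinearMap.ker_eq_bot']
    intro w hw
    have hPw : P ((w : T.domain) : H) = 0 := by
      rw [← hφ w, hw]; rfl
    have hTw : T (w : T.domain) = 0 := w.2
    have : ((w : T.domain) : H) = 0 :=
      hperp_top _ (hkerR _ hTw) (hPzero' _ hPw)
    exact Subtype.ext (Subtype.ext this)
  have hφsurj : Function.Surjective φ :=
    (LinearMap.injective_iff_surjective_of_finrank_eq_finrank hrank).mp hφinj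
  have hαne : (α : ℂ) ≠ 0 := by
    simp only [ne_eq, Complex.ofReal_eq_zero]
    exact ne_of_gt hα
  constructor
  · -- injectivity
    intro u v huv
    simp only at huv
    have hsub : T (u - v) + (α : ℂ) • P (((u - v : T.domain)) : H) = 0 := by
      have hco : (((u - v : T.domain)) : H) = (u : H) - (v : H) := rfl
      rw [T.map_sub, hco, _root_.map_sub, smul_sub]
      rw [show (T u : H) - T v + ((α:ℂ) • P (u:H) - (α:ℂ) • P (v:H))
          = (T u + (α:ℂ) • P (u:H)) - (T v + (α:ℂ) • P (v:H)) by abel, huv, sub_self]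
    have hTmem : T (u - v) ∈ R := LinearMap.mem_range_self _ _
    have hTQ : T (u - v) ∈ Q := by
      have h1 : T (u - v) = -((α : ℂ) • P (((u - v : T.domain)) : H)) :=
        eq_neg_of_add_eq_zero_left hsub
      rw [h1]
      exact neg_mem (Submodule.smul_mem _ _ (LinearMap.mem_range_self _ _))
    have hT0 : T (u - v) = 0 := by
      have : T (u - v) ∈ R ⊓ Q := ⟨hTmem, hTQ⟩
      rwa [hdirect, Submodule.mem_bot] at this
    have hP0 : P (((u - v : T.domain)) : H) = 0 := by
      rw [hT0, zero_add, smul_eq_zero] at hsub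
      exact hsub.resolve_left hαne
    have : (((u - v : T.domain)) : H) = 0 :=
      hperp_top _ (hkerR _ hT0) (hPzero' _ hP0)
    have : u - v = 0 := Subtype.ext this
    exact sub_eq_zero.mp this
  · -- surjectivity
    intro y
    have hy : y ∈ R ⊔ Q := by rw [hspan]; trivial
    obtain ⟨r, hr, q, hq, rfl⟩ := Submodule.mem_sup.mp hy
    obtain ⟨x, rfl⟩ := hr
    obtain ⟨w, hw⟩ := hφsurj ⟨(α : ℂ)⁻¹ • q - P x,
      sub_mem (Submodule.smul_mem _ _ hq) (LinearMap.mem_range_self _ _)⟩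
    refine ⟨x + (w : T.domain), ?_⟩
    have hTw : T (w : T.domain) = 0 := w.2
    have hPw : P (((w : T.domain)) : H) = (α : ℂ)⁻¹ • q - P x := by
      rw [← hφ w, hw]
    have hco : (((x + (w : T.domain) : T.domain)) : H) = (x : H) + ((w : T.domain) : H) := rfl
    simp only
    rw [T.map_add, hTw, add_zero, hco, _root_.map_add, hPw]
    rw [smul_add, smul_sub, smul_inv_smul₀ hαne]
    show T.toFun x + ((α:ℂ) • P (x:H) + (q - (α:ℂ) • P (x:H))) = T.toFun x + q
    abel
end

section
/- Let H be a complex Hilbert space, T : dom T ⊆ H → H a densely defined self-adjoint Fredholm operator, Π a finite rank orthogonal projection on H, and α > 0. Then T + iαΠ is invertible (bijective from dom T onto H) if and only if rg T + rg Π = H (the sum need not be direct). -/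
/-! If `(T + iαΠ)u = 0`, pairing with `u` and taking imaginary parts gives `α‖Πu‖² = 0`, hence
`Πu = 0` and `Tu = 0`; by self-adjointness `u` then lies in `(rg T)ᗮ ⊓ (rg Π)ᗮ = (rg T ⊔ rg Π)ᗮ`,
which is `0` when `rg T ⊔ rg Π = H`. Surjectivity is the index-zero argument: self-adjointness
gives `(rg T)ᗮ = ker T`, so with `π` the orthogonal projection onto `ker T` the map
`T + π : dom T → H` is an isomorphism, and `T + iαΠ` differs from it by a finite-rank operator.
An injective finite-rank perturbation `J + K` of an isomorphism `J` is surjective, because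
`id + K J⁻¹` preserves the finite-dimensional space `rg K`. Conversely `rg (T + iαΠ) ⊆ rg T ⊔ rg Π`.
-/

namespace LinearMap

variable {K V : Type*} [DivisionRing K] [AddCommGroup V] [Module K V]

theorem surjective_id_add_of_injective (f : V →ₗ[K] V) [FiniteDimensional K (range f)]
    (hinj : Function.Injective (LinearMap.id + f : V →ₗ[K] V)) :
    Function.Surjective (LinearMap.id + f : V →ₗ[K] V) := by
  have hmaps : Set.MapsTo (LinearMap.id + f : V →ₗ[K] V) (range f) (range f) := fun x hx =>
    (range f).add_mem hx (mem_range_self f x)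
  have hsurj : Function.Surjective ((LinearMap.id + f : V →ₗ[K] V).restrict hmaps) :=
    injective_iff_surjective.1 fun x y hxy => Subtype.ext (hinj congr(($hxy : V)))
  intro x
  obtain ⟨e, he⟩ := hsurj ⟨f x, mem_range_self f x⟩
  refine ⟨x - e, ?_⟩
  have he' : (e : V) + f e = f x := congr(($he : V))
  simp only [add_apply, id_apply, map_sub]
  rw [← he']
  abel

end LinearMap

namespace LinearEquiv

variable {K V W : Type*} [DivisionRing K] [AddCommGroup V] [Module K V] [AddCommGroup W]
  [Module K W]

theorem surjective_add_of_injective (J : V ≃ₗ[K] W) (f : V →ₗ[K] W)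
    [FiniteDimensional K (LinearMap.range f)] (hinj : Function.Injective (J.toLinearMap + f)) :
    Function.Surjective (J.toLinearMap + f) := by
  set g : W →ₗ[K] W := f ∘ₗ J.symm.toLinearMap
  have : FiniteDimensional K (LinearMap.range g) :=
    Submodule.finiteDimensional_of_le (LinearMap.range_comp_le_range _ _)
  have hfactor : J.toLinearMap + f = (LinearMap.id + g) ∘ₗ J.toLinearMap := by
    ext v; simp [g]
  rw [hfactor] at hinj ⊢
  refine (g.surjective_id_add_of_injective ?_).comp J.surjective
  simpa using hinj.comp J.symm.injective

end LinearEquiv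

namespace LinearPMap

section RCLike

variable {𝕜 H : Type*} [RCLike 𝕜] [NormedAddCommGroup H] [InnerProductSpace 𝕜 H]
  [CompleteSpace H] {T : H →ₗ.[𝕜] H}

theorem isFormalAdjoint_self_of_isSelfAdjoint (hT : IsSelfAdjoint T) : T.IsFormalAdjoint T := by
  have h := adjoint_isFormalAdjoint hT.dense_domain (T := T)
  rwa [isSelfAdjoint_def.1 hT] at h

theorem orthogonal_range_eq_map_ker (hT : IsSelfAdjoint T) :
    (LinearMap.range T.toFun)ᗮ = (LinearMap.ker T.toFun).map T.domain.subtype := by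
  ext v
  rw [Submodule.mem_orthogonal]
  constructor
  · intro hv
    have hv' : ∀ x : T.domain, inner 𝕜 (0 : H) (x : H) = inner 𝕜 v (T x) := fun x => by
      rw [inner_zero_left, ← inner_conj_symm, hv (T x) ⟨x, rfl⟩]; simp
    have hmem : v ∈ T†.domain := mem_adjoint_domain_of_exists v ⟨0, hv'⟩
    have hgraph : (v, (0 : H)) ∈ T.graph := by
      rw [← isSelfAdjoint_def.1 hT, mem_graph_iff]
      exact ⟨⟨v, hmem⟩, rfl, adjoint_apply_eq hT.dense_domain _ hv'⟩
    obtain ⟨y, hyv, hy⟩ := (mem_graph_iff T).1 hgraph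
    exact ⟨y, hy, hyv⟩
  · rintro ⟨y, hy, rfl⟩ _ ⟨x, rfl⟩
    exact (isFormalAdjoint_self_of_isSelfAdjoint hT x y).trans
      (by rw [show T y = 0 from hy, inner_zero_right])

theorem bijective_add_starProjection_orthogonal_range (hT : IsSelfAdjoint T)
    (hclosed : _root_.IsClosed (LinearMap.range T.toFun : Set H)) :
    Function.Bijective (T.toFun +
      ((LinearMap.range T.toFun)ᗮ.starProjection : H →ₗ[𝕜] H) ∘ₗ T.domain.subtype) := by
  set R := LinearMap.range T.toFun
  have hRperp : ∀ w ∈ Rᗮ, ∃ y : T.domain, T y = 0 ∧ (y : H) = w := by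
    rw [orthogonal_range_eq_map_ker hT]
    rintro _ ⟨y, hy, rfl⟩
    exact ⟨y, hy, rfl⟩
  constructor
  · refine (injective_iff_map_eq_zero _).2 fun u hu => ?_
    have hu : T u + Rᗮ.starProjection u = 0 := hu
    have hTu : T u = 0 := by
      have hmem : T u ∈ R ⊓ Rᗮ := by
        refine ⟨⟨u, rfl⟩, ?_⟩
        rw [eq_neg_of_add_eq_zero_left hu]
        exact Rᗮ.neg_mem (Rᗮ.starProjection_apply_mem u)
      simpa [Submodule.inf_orthogonal_eq_bot] using hmem
    have hperp : (u : H) ∈ Rᗮ := by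
      rw [orthogonal_range_eq_map_ker hT]
      exact ⟨u, hTu, rfl⟩
    rw [hTu, zero_add, Submodule.starProjection_eq_self_iff.2 hperp] at hu
    exact Subtype.ext hu
  · intro f
    have hRR : Rᗮᗮ = R := by
      rw [Submodule.orthogonal_orthogonal_eq_closure, hclosed.submodule_topologicalClosure_eq]
    obtain ⟨v, hv⟩ : f - Rᗮ.starProjection f ∈ R :=
      hRR.le (Rᗮ.sub_starProjection_mem_orthogonal f)
    obtain ⟨n₁, hn₁, hn₁v⟩ := hRperp _ (Rᗮ.starProjection_apply_mem v)
    obtain ⟨n₂, hn₂, hn₂f⟩ := hRperp _ (Rᗮ.starProjection_apply_mem f)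
    refine ⟨v - n₁ + n₂, ?_⟩
    have hπ : ∀ w, Rᗮ.starProjection (Rᗮ.starProjection w) = Rᗮ.starProjection w := fun w =>
      Submodule.starProjection_eq_self_iff.2 (Rᗮ.starProjection_apply_mem w)
    change T (v - n₁ + n₂) + Rᗮ.starProjection ((v : H) - n₁ + n₂) = f
    have hv : T v = f - Rᗮ.starProjection f := hv
    rw [LinearPMap.map_add, LinearPMap.map_sub, hn₁, hn₂, hv, hn₁v, hn₂f, _root_.map_add,
      _root_.map_sub, hπ, hπ]
    abel

theorem surjective_add_comp_of_injective (hT : IsSelfAdjoint T)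
    (hclosed : _root_.IsClosed (LinearMap.range T.toFun : Set H))
    [FiniteDimensional 𝕜 (LinearMap.ker T.toFun)] (K : H →ₗ[𝕜] H)
    [FiniteDimensional 𝕜 (LinearMap.range K)]
    (hinj : Function.Injective (T.toFun + K ∘ₗ T.domain.subtype)) :
    Function.Surjective (T.toFun + K ∘ₗ T.domain.subtype) := by
  set R := LinearMap.range T.toFun
  set π : H →ₗ[𝕜] H := Rᗮ.starProjection
  let J := LinearEquiv.ofBijective _ (bijective_add_starProjection_orthogonal_range hT hclosed)
  have : FiniteDimensional 𝕜 Rᗮ := by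
    rw [orthogonal_range_eq_map_ker hT]
    infer_instance
  have : FiniteDimensional 𝕜 (LinearMap.range ((K - π) ∘ₗ T.domain.subtype)) := by
    refine Submodule.finiteDimensional_of_le (S₂ := LinearMap.range K ⊔ Rᗮ) ?_
    rintro _ ⟨u, rfl⟩
    exact Submodule.sub_mem _ (Submodule.mem_sup_left ⟨u, rfl⟩)
      (Submodule.mem_sup_right (Rᗮ.starProjection_apply_mem u))
  have hJ :
      T.toFun + K ∘ₗ T.domain.subtype = J.toLinearMap + (K - π) ∘ₗ T.domain.subtype := by
    ext u
    change T u + K u = (T u + π u) + (K u - π u)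
    abel
  rw [hJ] at hinj ⊢
  exact J.surjective_add_of_injective _ hinj

end RCLike

section Complex

variable {H : Type*} [NormedAddCommGroup H] [InnerProductSpace ℂ H] [CompleteSpace H]
  {T : H →ₗ.[ℂ] H}

theorem IsFormalAdjoint.eq_zero_of_add_I_mul_smul_eq_zero (hT : T.IsFormalAdjoint T)
    {P : H →L[ℂ] H} (hPsa : IsSelfAdjoint P) (hPidem : P ∘L P = P) {α : ℝ} (hα : α ≠ 0)
    {u : T.domain} (hu : T u + (Complex.I * α) • P u = 0) : P u = 0 ∧ T u = 0 := by
  have him_T : (inner ℂ (u : H) (T u)).im = 0 := by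
    rw [← Complex.conj_eq_iff_im, inner_conj_symm]
    exact hT u u
  have hinner_P : inner ℂ (u : H) (P u) = ((‖P u‖ ^ 2 : ℝ) : ℂ) := by
    have hPP : P (P u) = P u := congr($hPidem u)
    calc inner ℂ (u : H) (P u) = inner ℂ (u : H) (P (P u)) := by rw [hPP]
      _ = inner ℂ (P u) (P u) := (hPsa.isSymmetric _ _).symm
      _ = ((‖P u‖ ^ 2 : ℝ) : ℂ) := by rw [inner_self_eq_norm_sq_to_K]; push_cast; rfl
  have hnorm : α * ‖P u‖ ^ 2 = 0 := by
    have h := congrArg (fun w => (inner ℂ (u : H) w).im) hu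
    simpa [inner_add_right, inner_smul_right, him_T, hinner_P, ← Complex.ofReal_pow] using h
  have hPu : P u = 0 := by simpa [hα] using hnorm
  exact ⟨hPu, by simpa [hPu] using hu⟩

theorem injective_add_I_mul_smul_of_sup_eq_top (hT : IsSelfAdjoint T) {P : H →L[ℂ] H}
    (hPsa : IsSelfAdjoint P) (hPidem : P ∘L P = P) {α : ℝ} (hα : α ≠ 0)
    (htop : LinearMap.range T.toFun ⊔ LinearMap.range (P : H →ₗ[ℂ] H) = ⊤) :
    Function.Injective
      (T.toFun + ((Complex.I * α) • (P : H →ₗ[ℂ] H)) ∘ₗ T.domain.subtype) := by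
  refine (injective_iff_map_eq_zero _).2 fun u hu => ?_
  obtain ⟨hPu, hTu⟩ :=
    (isFormalAdjoint_self_of_isSelfAdjoint hT).eq_zero_of_add_I_mul_smul_eq_zero hPsa hPidem hα hu
  have hperp : (u : H) ∈ (LinearMap.range T.toFun ⊔ LinearMap.range (P : H →ₗ[ℂ] H))ᗮ := by
    rw [← Submodule.inf_orthogonal, orthogonal_range_eq_map_ker hT]
    refine ⟨⟨u, hTu, rfl⟩, ?_⟩
    change (u : H) ∈ P.rangeᗮ
    rw [ContinuousLinearMap.orthogonal_range, hPsa.adjoint_eq]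
    exact hPu
  rw [htop, Submodule.top_orthogonal_eq_bot] at hperp
  exact Subtype.ext hperp

end Complex

end LinearPMap

theorem stmt1_general {H : Type*} [NormedAddCommGroup H] [InnerProductSpace ℂ H] [CompleteSpace H]
    (T : H →ₗ.[ℂ] H)
    (hsa : IsSelfAdjoint T)
    (hclosed : IsClosed ((LinearMap.range T.toFun : Submodule ℂ H) : Set H))
    (hker : FiniteDimensional ℂ (LinearMap.ker T.toFun))
    (P : H →L[ℂ] H) (hPsa : IsSelfAdjoint P) (hPidem : P ∘L P = P)
    (hPfin : FiniteDimensional ℂ (LinearMap.range (P : H →ₗ[ℂ] H)))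
    (α : ℝ) (hα : 0 < α) :
    Function.Bijective (fun u : T.domain => T u + (Complex.I * (α : ℂ)) • P (u : H)) ↔
      LinearMap.range T.toFun ⊔ LinearMap.range (P : H →ₗ[ℂ] H) = ⊤ := by
  set S : T.domain →ₗ[ℂ] H :=
    T.toFun + ((Complex.I * α) • (P : H →ₗ[ℂ] H)) ∘ₗ T.domain.subtype
  change Function.Bijective S ↔ _
  have : FiniteDimensional ℂ (LinearMap.range ((Complex.I * α) • (P : H →ₗ[ℂ] H))) :=
    Submodule.finiteDimensional_of_le (LinearMap.range_smul_le_range _ _)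
  constructor
  · refine fun hS => eq_top_iff.2 fun f _ => ?_
    obtain ⟨u, rfl⟩ := hS.2 f
    exact Submodule.add_mem_sup ⟨u, rfl⟩ (Submodule.smul_mem _ _ ⟨u, rfl⟩)
  · intro htop
    have hinj := LinearPMap.injective_add_I_mul_smul_of_sup_eq_top hsa hPsa hPidem hα.ne' htop
    exact ⟨hinj, LinearPMap.surjective_add_comp_of_injective hsa hclosed _ hinj⟩

/-- Lemma 5.2(b): Let `H` be a complex Hilbert space, `T` a densely defined self-adjoint
Fredholm operator, `P` a finite rank orthogonal projection, `α > 0`. Then `T + iαP` is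
invertible (bijective from `dom T` onto `H`) if and only if `rg T + rg P = H`. -/
theorem stmt1 {H : Type*} [NormedAddCommGroup H] [InnerProductSpace ℂ H] [CompleteSpace H]
    (T : H →ₗ.[ℂ] H) (hdense : Dense (T.domain : Set H))
    (hsa : IsSelfAdjoint T)
    (hclosed : IsClosed ((LinearMap.range T.toFun : Submodule ℂ H) : Set H))
    (hker : FiniteDimensional ℂ (LinearMap.ker T.toFun))
    (hcoker : FiniteDimensional ℂ (H ⧸ LinearMap.range T.toFun))
    (P : H →L[ℂ] H) (hPsa : IsSelfAdjoint P) (hPidem : P ∘L P = P)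
    (hPfin : FiniteDimensional ℂ (LinearMap.range (P : H →ₗ[ℂ] H)))
    (α : ℝ) (hα : 0 < α) :
    Function.Bijective (fun u : T.domain => T u + (Complex.I * (α : ℂ)) • P (u : H)) ↔
      LinearMap.range T.toFun ⊔ LinearMap.range (P : H →ₗ[ℂ] H) = ⊤ :=
  stmt1_general T hsa hclosed hker P hPsa hPidem hPfin α hα
end

section
/- Let H be a Hilbert space, T : H → H a bounded idempotent (T² = T) with adjoint T⋆. Then Id + T − T⋆ is invertible, and T₀ := T (Id + T − T⋆)⁻¹ is the orthogonal projection onto rg T. -/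
/-!
`T - T⋆` is skew-adjoint, so its spectrum lies on the imaginary axis and `A := 1 + T - T⋆` is
invertible in the C⋆-algebra of bounded operators. The two identities `T⋆ A = T⋆ T = A⋆ T` give
`(T A⁻¹)⋆ = A⋆⁻¹ T⋆ A A⁻¹ = A⋆⁻¹ A⋆ T A⁻¹ = T A⁻¹`. Hence `P := T A⁻¹` is self-adjoint, so
`P T⋆ = P` (the adjoint of `T P = P`), and then `P = P A = P + P T - P T⋆` forces `P T = T`.
This gives both `P² = P` and `rg P = rg T`.
-/

section StarRing

variable {R : Type*} [Ring R] [StarRing R] {p s : R}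

theorem sub_star_mem_skewAdjoint (p : R) : p - star p ∈ skewAdjoint R := by
  rw [skewAdjoint.mem_iff, star_sub, star_star, neg_sub]

theorem isStarProjection_mul_of_isIdempotentElem (hp : IsIdempotentElem p)
    (hs₁ : (1 + p - star p) * s = 1) (hs₂ : s * (1 + p - star p) = 1) :
    IsStarProjection (p * s) ∧ p * s * p = p := by
  have hsa : IsSelfAdjoint (p * s) := by
    have hs₁' : star s * (1 + star p - p) = 1 := by
      simpa [star_sub, star_add, star_mul] using congrArg star hs₁
    have key : star p * (1 + p - star p) = (1 + star p - p) * p := by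
      have hp' : star p * star p = star p := by rw [← star_mul, hp.eq]
      simp only [mul_add, add_mul, mul_sub, sub_mul, mul_one, one_mul, hp', hp.eq]; abel
    calc star (p * s) = star s * (star p * (1 + p - star p)) * s := by
          rw [star_mul, mul_assoc, mul_assoc, hs₁, mul_one]
      _ = p * s := by rw [key, ← mul_assoc, hs₁', one_mul]
  have hfix : p * s * p = p := by
    have hps : p * s * star p = p * s := by
      have := congrArg star (show p * (p * s) = p * s by rw [← mul_assoc, hp.eq])
      rwa [star_mul, hsa.star_eq] at this
    calc p * s * p = p * s * (1 + p - star p) := by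
          rw [mul_sub, hps, mul_add, mul_one, add_sub_cancel_left]
      _ = p := by rw [mul_assoc, hs₂, mul_one]
  refine ⟨⟨?_, hsa⟩, hfix⟩
  rw [IsIdempotentElem, ← mul_assoc, hfix]

end StarRing

open Complex in
theorem isUnit_one_add_of_mem_skewAdjoint {A : Type*} [CStarAlgebra A] {k : A}
    (hk : k ∈ skewAdjoint A) : IsUnit (1 + k) := by
  by_contra h
  have hmem : (-1 : ℂ) ∈ spectrum ℂ k := by
    rwa [spectrum.mem_iff, map_neg, map_one, ← neg_add', IsUnit.neg_iff]
  have hImem := spectrum.smul_mem_smul_iff (r := Units.mk0 I I_ne_zero) |>.mpr hmem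
  rw [Units.smul_def, Units.smul_def, Units.val_mk0] at hImem
  simpa using (IsSelfAdjoint.I_smul_of_mem_skewAdjoint hk).im_eq_zero_of_mem_spectrum hImem

/-- Booss–Lesch–Zhu Lemma 3.5(b): for a bounded idempotent `T` on a Hilbert space,
`Id + T - T⋆` is invertible and `T (Id + T - T⋆)⁻¹` is the orthogonal projection
(self-adjoint idempotent) onto `rg T`. -/
theorem stmt3 {H : Type*} [NormedAddCommGroup H] [InnerProductSpace ℂ H] [CompleteSpace H]
    (T : H →L[ℂ] H) (hT : T ∘L T = T) :
    ∃ S : H →L[ℂ] H,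
      (1 + T - ContinuousLinearMap.adjoint T) ∘L S = 1 ∧
      S ∘L (1 + T - ContinuousLinearMap.adjoint T) = 1 ∧
      IsSelfAdjoint (T ∘L S) ∧
      (T ∘L S) ∘L (T ∘L S) = T ∘L S ∧
      LinearMap.range ((T ∘L S) : H →ₗ[ℂ] H) = LinearMap.range (T : H →ₗ[ℂ] H) := by
  obtain ⟨A, hA⟩ : IsUnit (1 + T - star T) := by
    simpa only [add_sub_assoc] using isUnit_one_add_of_mem_skewAdjoint (sub_star_mem_skewAdjoint T)
  have hA₁ : (1 + T - star T) * ↑A⁻¹ = 1 := hA ▸ A.mul_inv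
  have hA₂ : ↑A⁻¹ * (1 + T - star T) = 1 := hA ▸ A.inv_mul
  obtain ⟨hP, hPT⟩ := isStarProjection_mul_of_isIdempotentElem hT hA₁ hA₂
  refine ⟨↑A⁻¹, hA₁, hA₂, hP.isSelfAdjoint, hP.isIdempotentElem, ?_⟩
  refine le_antisymm (LinearMap.range_comp_le_range _ _) ?_
  calc LinearMap.range (T : H →ₗ[ℂ] H)
      _ = LinearMap.range ((T * ↑A⁻¹ * T : H →L[ℂ] H) : H →ₗ[ℂ] H) := by rw [hPT]
      _ ≤ _ := LinearMap.range_comp_le_range _ _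
end

section
/- Let V be a vector space, T : V → V a linear map, and Π : V → V a linear projection (Π² = Π) whose range satisfies rg Π ⊆ ker T, and suppose rg Π ∩ rg T = {0}. If γ : V → W is a linear map with rg Π ⊆ ker γ, then γ(ker T) = γ(ker(T + Π)); i.e., the boundary data spaces of T and of the modification T + Π coincide. -/
/-- Proposition 4.4 (first part), abstract form: if `Pr` is a linear projection with
`rg Pr ⊆ ker T ∩ ker γ` and `rg Pr ∩ rg T = {0}`, then the boundary data spaces of `T`
and of the modification `T + Pr` coincide: `γ(ker T) = γ(ker (T + Pr))`. -/
theorem stmt6 {𝕜 V W : Type*} [Field 𝕜] [AddCommGroup V] [Module 𝕜 V]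
    [AddCommGroup W] [Module 𝕜 W]
    (T Pr : V →ₗ[𝕜] V) (γ : V →ₗ[𝕜] W)
    (hidem : Pr ∘ₗ Pr = Pr)
    (hrT : LinearMap.range Pr ≤ LinearMap.ker T)
    (hrγ : LinearMap.range Pr ≤ LinearMap.ker γ)
    (hint : LinearMap.range Pr ⊓ LinearMap.range T = ⊥) :
    Submodule.map γ (LinearMap.ker T) = Submodule.map γ (LinearMap.ker (T + Pr)) := by
  apply le_antisymm
  · rintro _ ⟨u, hu, rfl⟩
    refine ⟨u - Pr u, ?_, ?_⟩
    · have h1 : T (Pr u) = 0 := hrT ⟨u, rfl⟩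
      have h2 : Pr (Pr u) = Pr u := congrArg (fun f => f u) hidem
      have h0 : T u = 0 := hu
      show (T + Pr) (u - Pr u) = 0
      rw [LinearMap.add_apply, map_sub, map_sub, h0, h1, h2]
      abel
    · have h3 : γ (Pr u) = 0 := hrγ ⟨u, rfl⟩
      simp [h3]
  · rintro _ ⟨u, hu, rfl⟩
    refine ⟨u, ?_, rfl⟩
    have hu' : T u + Pr u = 0 := hu
    have hmem : Pr u ∈ LinearMap.range Pr ⊓ LinearMap.range T :=
      ⟨⟨u, rfl⟩, ⟨-u, by rw [map_neg]; linear_combination (norm := abel) -hu'⟩⟩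
    rw [hint] at hmem
    have : Pr u = 0 := hmem
    simpa [this] using hu'
end

section
/- Let V, W be vector spaces, T : V → V linear, γ : V → W linear, and Π : V → V a projection with rg Π = ker T ∩ ker γ and rg Π ∩ rg T = {0}. Then ker(T + Π) ∩ ker γ = {0}. -/
/-- Proposition 4.4 (second part): if `Pr` is a projection with
`rg Pr = ker T ∩ ker γ` and `rg Pr ∩ rg T = {0}`, then `ker (T + Pr) ∩ ker γ = {0}`,
i.e. the modification `T + Pr` has no shadow solutions. -/
theorem stmt7 {𝕜 V W : Type*} [Field 𝕜] [AddCommGroup V] [Module 𝕜 V]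
    [AddCommGroup W] [Module 𝕜 W]
    (T Pr : V →ₗ[𝕜] V) (γ : V →ₗ[𝕜] W)
    (hidem : Pr ∘ₗ Pr = Pr)
    (hrange : LinearMap.range Pr = LinearMap.ker T ⊓ LinearMap.ker γ)
    (hint : LinearMap.range Pr ⊓ LinearMap.range T = ⊥) :
    LinearMap.ker (T + Pr) ⊓ LinearMap.ker γ = ⊥ := by
  rw [eq_bot_iff]
  intro x hx
  obtain ⟨hx1, hx2⟩ := Submodule.mem_inf.mp hx
  rw [LinearMap.mem_ker, LinearMap.add_apply] at hx1
  have hPrx : Pr x ∈ LinearMap.range Pr ⊓ LinearMap.range T :=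
    ⟨⟨x, rfl⟩, ⟨-x, by rw [map_neg]; exact neg_eq_of_add_eq_zero_right hx1⟩⟩
  rw [hint, Submodule.mem_bot] at hPrx
  have hTx : T x = 0 := by rw [← hx1, hPrx, add_zero]
  have hx : x ∈ LinearMap.range Pr := by
    rw [hrange]; exact ⟨hTx, hx2⟩
  obtain ⟨y, hy⟩ := hx
  have : Pr (Pr y) = Pr y := by
    rw [← LinearMap.comp_apply, hidem]
  rw [Submodule.mem_bot, ← hy, ← this, hy, hPrx]
end

section
/- Let V₁, V₂, F₁, F₂ be vector spaces, T : V₁ → V₂ and U : F₁ → F₂ linear, and let T̄ = T ⊕ U : V₁ ⊕ F₁ → V₂ ⊕ F₂. Let γ̄ be a boundary map on V₁ ⊕ F₁ compatible with the direct sum, i.e. γ̄(u, f) = (γu, γ'f) for linear maps γ, γ'. If C̄ is a projection of the boundary data target space onto B_{T̄} = {γ̄w : T̄w = 0}, then C := π ∘ C̄ ∘ ι, where ι is the inclusion of the first summand and π the projection onto it, is a projection onto B_T = {γu : Tu = 0}. -/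
/-- Proposition 4.2 (Calderón projectors and augmentations), abstract form: if `C̄` is a
projection of the boundary data target space `W × W'` onto the boundary data space of the
direct sum operator `T̄ = T ⊕ U` (with boundary data map `γ̄ = γ ⊕ γ'`), then
`C = π ∘ C̄ ∘ ι` is a projection of `W` onto the boundary data space of `T`. -/
theorem stmt9 {𝕜 V₁ V₂ F₁ F₂ W W' : Type*} [Field 𝕜]
    [AddCommGroup V₁] [Module 𝕜 V₁] [AddCommGroup V₂] [Module 𝕜 V₂]
    [AddCommGroup F₁] [Module 𝕜 F₁] [AddCommGroup F₂] [Module 𝕜 F₂]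
    [AddCommGroup W] [Module 𝕜 W] [AddCommGroup W'] [Module 𝕜 W']
    (T : V₁ →ₗ[𝕜] V₂) (U : F₁ →ₗ[𝕜] F₂) (γ : V₁ →ₗ[𝕜] W) (γ' : F₁ →ₗ[𝕜] W')
    (Cb : (W × W') →ₗ[𝕜] (W × W'))
    (hidem : Cb ∘ₗ Cb = Cb)
    (hrange : LinearMap.range Cb
      = Submodule.map (γ.prodMap γ') (LinearMap.ker (T.prodMap U))) :
    (((LinearMap.fst 𝕜 W W') ∘ₗ Cb ∘ₗ (LinearMap.inl 𝕜 W W')) ∘ₗ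
        ((LinearMap.fst 𝕜 W W') ∘ₗ Cb ∘ₗ (LinearMap.inl 𝕜 W W'))
      = (LinearMap.fst 𝕜 W W') ∘ₗ Cb ∘ₗ (LinearMap.inl 𝕜 W W')) ∧
    LinearMap.range ((LinearMap.fst 𝕜 W W') ∘ₗ Cb ∘ₗ (LinearMap.inl 𝕜 W W'))
      = Submodule.map γ (LinearMap.ker T) := by
  -- Cb fixes its range
  have hfix : ∀ x ∈ LinearMap.range Cb, Cb x = x := by
    rintro x ⟨y, rfl⟩
    exact congrArg (· y) hidem
  set C : W →ₗ[𝕜] W :=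
    (LinearMap.fst 𝕜 W W') ∘ₗ Cb ∘ₗ (LinearMap.inl 𝕜 W W') with hC
  -- elements of B_T embed into range Cb
  have hmem : ∀ w ∈ Submodule.map γ (LinearMap.ker T),
      ((w, 0) : W × W') ∈ LinearMap.range Cb := by
    rintro w ⟨u, hu, rfl⟩
    rw [hrange]
    refine ⟨(u, 0), ?_, ?_⟩
    · simp [LinearMap.mem_ker, LinearMap.mem_ker.mp hu]
    · simp
  -- C fixes B_T
  have hCfix : ∀ w ∈ Submodule.map γ (LinearMap.ker T), C w = w := by
    intro w hw
    have := hfix _ (hmem w hw)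
    simp only [hC, LinearMap.comp_apply, LinearMap.inl_apply, LinearMap.fst_apply]
    rw [this]
  -- C maps into B_T
  have hCin : ∀ w : W, C w ∈ Submodule.map γ (LinearMap.ker T) := by
    intro w
    have : Cb (w, 0) ∈ LinearMap.range Cb := ⟨(w, 0), rfl⟩
    rw [hrange] at this
    obtain ⟨⟨u, f⟩, huf, h⟩ := this
    refine ⟨u, ?_, ?_⟩
    · exact LinearMap.mem_ker.mpr (congrArg Prod.fst (LinearMap.mem_ker.mp huf))
    · simpa [hC] using congrArg Prod.fst h
  constructor
  · ext w
    simpa using hCfix (C w) (hCin w)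
  · refine le_antisymm ?_ ?_
    · rintro w ⟨v, rfl⟩; exact hCin v
    · intro w hw; exact ⟨w, hCfix w hw⟩
end

section
/- Let Z be a smooth manifold of finite dimension and let 𝒱 → Z be a 'bundle' whose fibers are infinite-dimensional vector spaces (e.g. an assignment z ↦ 𝒱_z of infinite-dimensional vector spaces with a notion of smooth section closed under pointwise operations, such that for any finitely many sections one can find a section pointwise outside their span). Given smooth sections w₁, …, w_k of 𝒱, there exist smooth sections s₁, …, s_k such that for every ε ≠ 0, the sections w₁ + εs₁, …, w_k + εs_k are pointwise linearly independent, i.e. for every z ∈ Z the vectors wᵢ(z) + εsᵢ(z), i = 1,…,k, are linearly independent in 𝒱_z. -/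
/-- Inductive construction of the perturbing sections: there is a sequence of sections of `Γ`
each of which pointwise avoids the span of all the `w i` together with the previous sections. -/
lemma stmt11_aux {𝕜 Z : Type*} [Field 𝕜] {V : Z → Type*}
    [∀ z, AddCommGroup (V z)] [∀ z, Module 𝕜 (V z)]
    (Γ : Submodule 𝕜 (∀ z, V z))
    (havoid : ∀ (n : ℕ) (u : Fin n → ∀ z, V z), (∀ i, u i ∈ Γ) →
      ∃ s ∈ Γ, ∀ z, s z ∉ Submodule.span 𝕜 (Set.range fun i => u i z))
    (k : ℕ) (w : Fin k → ∀ z, V z) (hw : ∀ i, w i ∈ Γ) :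
    ∀ n : ℕ, ∃ S : Fin n → ∀ z, V z, (∀ i, S i ∈ Γ) ∧
      ∀ (j : Fin n) (z : Z), S j z ∉ Submodule.span 𝕜
        ((Set.range fun i => w i z) ∪ (fun i => S i z) '' {i | i < j}) := by
  intro n
  induction n with
  | zero => exact ⟨finZeroElim, fun i => i.elim0, fun j => j.elim0⟩
  | succ n ih =>
    obtain ⟨S, hS, hav⟩ := ih
    obtain ⟨t, ht, hta⟩ := havoid (k + n) (Fin.append w S) (by
      intro i
      refine Fin.addCases (fun i => ?_) (fun i => ?_) i
      · simpa using hw i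
      · simpa using hS i)
    refine ⟨(Fin.snoc S t : Fin (n+1) → ∀ z, V z), ?_, ?_⟩
    · intro i
      refine Fin.lastCases ?_ (fun i => ?_) i
      · simpa using ht
      · simpa using hS i
    · intro j z
      refine Fin.lastCases ?_ (fun j => ?_) j
      · -- j = last
        simp only [Fin.snoc_last]
        intro hmem
        apply hta z
        refine Submodule.span_mono ?_ hmem
        rintro x (⟨i, rfl⟩ | ⟨i, hi, rfl⟩)
        · exact ⟨Fin.castAdd n i, by simp⟩
        · have hne : i ≠ Fin.last n := Fin.ne_last_of_lt hi
          obtain ⟨i', rfl⟩ := Fin.exists_castSucc_eq.mpr hne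
          exact ⟨Fin.natAdd k i', by simp⟩
      · -- j = castSucc j'
        have hset : ((fun i => Fin.snoc (α := fun _ => ∀ z, V z) S t i z) '' {i : Fin (n+1) | i < j.castSucc})
            = ((fun i => S i z) '' {i | i < j}) := by
          ext x
          constructor
          · rintro ⟨i, hi, rfl⟩
            have hne : i ≠ Fin.last n := Fin.ne_last_of_lt hi
            obtain ⟨i', rfl⟩ := Fin.exists_castSucc_eq.mpr hne
            exact ⟨i', by simpa using hi, by simp⟩
          · rintro ⟨i, hi, rfl⟩
            exact ⟨i.castSucc, by simpa using hi, by simp⟩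
        simp only [Fin.snoc_castSucc, hset]
        exact hav j z

/-- Lemma 5.4, abstract form: let `Γ` be a space of sections of a family of vector spaces
`V z` over a base `Z`, closed under pointwise operations, such that for any finitely many
sections of `Γ` there is a section of `Γ` pointwise avoiding their span (possible when the
fibres are infinite dimensional). Given sections `w₁, …, w_k ∈ Γ` there are sections
`s₁, …, s_k ∈ Γ` such that for every `ε ≠ 0` the sections `wᵢ + ε sᵢ` are pointwise
linearly independent. -/
theorem stmt11 {𝕜 Z : Type*} [Field 𝕜] {V : Z → Type*}
    [∀ z, AddCommGroup (V z)] [∀ z, Module 𝕜 (V z)]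
    (Γ : Submodule 𝕜 (∀ z, V z))
    (havoid : ∀ (n : ℕ) (u : Fin n → ∀ z, V z), (∀ i, u i ∈ Γ) →
      ∃ s ∈ Γ, ∀ z, s z ∉ Submodule.span 𝕜 (Set.range fun i => u i z))
    (k : ℕ) (w : Fin k → ∀ z, V z) (hw : ∀ i, w i ∈ Γ) :
    ∃ s : Fin k → ∀ z, V z, (∀ i, s i ∈ Γ) ∧
      ∀ ε : 𝕜, ε ≠ 0 → ∀ z : Z,
        LinearIndependent 𝕜 (fun i : Fin k => w i z + ε • s i z) := by
  classical
  obtain ⟨S, hS, hav⟩ := stmt11_aux Γ havoid k w hw k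
  refine ⟨S, hS, ?_⟩
  intro ε hε z
  rw [Fintype.linearIndependent_iff]
  intro g hg
  by_contra hcon
  push_neg at hcon
  -- take the largest index with nonzero coefficient
  set F : Finset (Fin k) := Finset.univ.filter (fun i => g i ≠ 0) with hF
  have hFne : F.Nonempty := by
    obtain ⟨i, hi⟩ := hcon
    exact ⟨i, by simp [hF, hi]⟩
  set j : Fin k := F.max' hFne with hj
  have hgj : g j ≠ 0 := by
    have := F.max'_mem hFne
    simpa [hF] using this
  have hgt : ∀ i, j < i → g i = 0 := by
    intro i hi
    by_contra hgi
    exact absurd (F.le_max' i (by simp [hF, hgi])) (not_le.mpr hi)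
  set M := Submodule.span 𝕜 ((Set.range fun i => w i z) ∪ (fun i => S i z) '' {i | i < j}) with hM
  have ha : (∑ i, g i • w i z) ∈ M := by
    refine Submodule.sum_mem _ fun i _ => Submodule.smul_mem _ _ ?_
    exact Submodule.subset_span (Or.inl ⟨i, rfl⟩)
  have hb : (∑ i ∈ Finset.univ.filter (fun i => i < j), g i • S i z) ∈ M := by
    refine Submodule.sum_mem _ fun i hi => Submodule.smul_mem _ _ ?_
    refine Submodule.subset_span (Or.inr ⟨i, ?_, rfl⟩)
    simpa using (Finset.mem_filter.mp hi).2
  -- split the sum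
  have hsplit : (∑ i, g i • S i z)
      = (∑ i ∈ Finset.univ.filter (fun i => i < j), g i • S i z) + g j • S j z := by
    have hpt : ∀ i : Fin k, g i • S i z
        = (if i < j then g i • S i z else 0) + (if i = j then g i • S i z else 0) := by
      intro i
      rcases lt_trichotomy i j with h | h | h
      · simp [h, h.ne]
      · simp [h]
      · simp [hgt i h, not_lt.mpr h.le, h.ne']
    calc (∑ i, g i • S i z)
        = ∑ i, ((if i < j then g i • S i z else 0) + (if i = j then g i • S i z else 0)) := by
          exact Finset.sum_congr rfl fun i _ => hpt i
      _ = (∑ i ∈ Finset.univ.filter (fun i => i < j), g i • S i z) + g j • S j z := by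
          rw [Finset.sum_add_distrib, Finset.sum_ite_eq' Finset.univ j (fun i => g i • S i z)
            , Finset.sum_filter]
          simp
  -- rearrange the dependence relation
  have hg' : (∑ i, g i • w i z) + ε • (∑ i, g i • S i z) = 0 := by
    rw [Finset.smul_sum, ← Finset.sum_add_distrib, ← hg]
    exact Finset.sum_congr rfl fun i _ => by rw [smul_add, smul_comm]
  rw [hsplit, smul_add, ← add_assoc, ← mul_smul] at hg'
  have key : (ε * g j) • S j z
      = -((∑ i, g i • w i z) + ε • (∑ i ∈ Finset.univ.filter (fun i => i < j), g i • S i z)) :=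
    eq_neg_of_add_eq_zero_right hg'
  have hmem : S j z ∈ M := by
    have h1 : S j z = (ε * g j)⁻¹ • ((ε * g j) • S j z) := by
      rw [smul_smul, inv_mul_cancel₀ (mul_ne_zero hε hgj), one_smul]
    rw [h1, key]
    exact Submodule.smul_mem _ _ (Submodule.neg_mem _
      (Submodule.add_mem _ ha (Submodule.smul_mem _ _ hb)))
  exact hav j z hmem
end
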